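/- For every real constant c > 0 and natural number N with N > c/e, the tail sum ∑_{n > N} (c/n)^n is bounded by (c/N)^N · 1/(1 + ln(N/c)). -/

import Mathlib

/-!
The function `x ↦ x log (c/x)` is concave with slope `-(1 + log (N/c))` at `x = N`, so by the tangent
line bound `(c/n)^n ≤ (c/N)^N q^(n-N)` for all `n ≥ N`, where `q = exp (-(1 + log (N/c)))`. The
hypothesis `N > c/e` makes `1 + log (N/c) =: L` positive, so the geometric tail sums to
`(c/N)^N / (e^L - 1) ≤ (c/N)^N / L`.
-/

open Real

lemma one_add_log_div_pos {c x : ℝ} (hc : 0 < c) (hx : c / exp 1 < x) : 0 < 1 + log (x / c) := by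
  have hx_pos : 0 < x := (div_pos hc (exp_pos 1)).trans hx
  have : exp (-1) < x / c := by
    rwa [lt_div_iff₀ hc, exp_neg, inv_mul_eq_div]
  linarith [(lt_log_iff_exp_lt (div_pos hx_pos hc)).mpr this]

lemma mul_log_div_le_tangent {c x y : ℝ} (hc : 0 < c) (hx : 0 < x) (hy : 0 < y) :
    x * log (c / x) ≤ y * log (c / y) - (1 + log (y / c)) * (x - y) := by
  have hxy : x - y ≤ x * log (x / y) := by
    have h := log_le_sub_one_of_pos (div_pos hy hx)
    rw [log_div hy.ne' hx.ne'] at h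
    rw [log_div hx.ne' hy.ne']
    have : x * (y / x) = y := by field_simp
    nlinarith
  rw [log_div hc.ne' hx.ne', log_div hc.ne' hy.ne', log_div hy.ne' hc.ne']
  rw [log_div hx.ne' hy.ne'] at hxy
  nlinarith

lemma div_pow_le_mul_exp_neg_pow {c : ℝ} (hc : 0 < c) {m : ℕ} (hm : 0 < m) (k : ℕ) :
    (c / ((m : ℝ) + k)) ^ (m + k) ≤ (c / m) ^ m * exp (-(1 + log (m / c))) ^ k := by
  have hm' : (0 : ℝ) < m := Nat.cast_pos.mpr hm
  have hmk : (0 : ℝ) < m + k := by positivity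
  have pow_eq_exp : ∀ {x : ℝ} (n : ℕ), 0 < x → (c / x) ^ n = exp (n * log (c / x)) := fun n hx ↦ by
    rw [exp_nat_mul, exp_log (div_pos hc hx)]
  rw [pow_eq_exp _ hmk, pow_eq_exp _ hm', ← exp_nat_mul, ← exp_add, exp_le_exp]
  have := mul_log_div_le_tangent hc hmk hm'
  push_cast
  linarith

lemma tsum_exp_neg_pow_succ_le {L : ℝ} (hL : 0 < L) : ∑' j : ℕ, exp (-L) ^ (j + 1) ≤ 1 / L := by
  have hq_lt : exp (-L) < 1 := exp_lt_one_iff.mpr (by linarith)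
  simp_rw [pow_succ, tsum_mul_right, tsum_geometric_of_lt_one (exp_pos _).le hq_lt]
  have hexp : exp (-L) * exp L = 1 := by rw [← exp_add]; simp
  rw [← div_eq_inv_mul, div_le_div_iff₀ (by linarith) hL]
  nlinarith [add_one_le_exp L, exp_pos (-L)]

/-- Tail sum estimate: for `c > 0` and natural `N > c/e`,
`∑_{n > N} (c/n)^n ≤ (c/N)^N · 1/(1 + ln(N/c))`. -/
theorem tail_sum_bound (c : ℝ) (hc : 0 < c) (N : ℕ) (hN : (N : ℝ) > c / Real.exp 1) :
    ∑' j : ℕ, (c / ((N : ℝ) + 1 + j)) ^ (N + 1 + j) ≤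
      (c / N) ^ N * (1 / (1 + Real.log (N / c))) := by
  have hN_pos : 0 < N := Nat.cast_pos.mp ((div_pos hc (exp_pos 1)).trans hN)
  set q := exp (-(1 + log (N / c)))
  have hterm (j : ℕ) : (c / ((N : ℝ) + 1 + j)) ^ (N + 1 + j) ≤ (c / N) ^ N * q ^ (j + 1) := by
    rw [add_assoc N, add_comm 1 j, add_assoc (N : ℝ), add_comm (1 : ℝ)]
    exact_mod_cast div_pow_le_mul_exp_neg_pow hc hN_pos (j + 1)
  have hq_summable : Summable fun j : ℕ ↦ (c / N) ^ N * q ^ (j + 1) :=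
    ((summable_nat_add_iff 1).mpr
      (summable_geometric_of_lt_one (exp_pos _).le
        (exp_lt_one_iff.mpr (by linarith [one_add_log_div_pos hc hN])))).mul_left _
  calc ∑' j : ℕ, (c / ((N : ℝ) + 1 + j)) ^ (N + 1 + j)
      ≤ ∑' j : ℕ, (c / N) ^ N * q ^ (j + 1) :=
        (hq_summable.of_nonneg_of_le (fun j ↦ by positivity) hterm).tsum_le_tsum hterm hq_summable
    _ ≤ (c / N) ^ N * (1 / (1 + log (N / c))) := by
        rw [tsum_mul_left]
        exact mul_le_mul_of_nonneg_left (tsum_exp_neg_pow_succ_le (one_add_log_div_pos hc hN))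
          (by positivity)
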